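/- Let τ be a rearrangement of dyadic intervals such that for some constant C ≥ 1, ⟦τ(B)⟧ ≤ C ⟦B⟧² for every collection B of dyadic intervals. Then ⟦τ(B)⟧ ≤ 16C ⟦B⟧ for every collection B. (Use the decomposition of B into at most 4⟦B⟧ subcollections each of Carleson constant ≤ 4.) -/

import Mathlib

open MeasureTheory

/-- A dyadic interval `[k/2^n, (k+1)/2^n)` of `[0,1)`. -/
structure DI where
  n : ℕ
  k : ℕ
  hk : k < 2 ^ n

namespace DI

/-- The underlying set of a dyadic interval. -/
def carrier (I : DI) : Set ℝ := Set.Ico ((I.k : ℝ) / 2 ^ I.n) ((I.k + 1 : ℝ) / 2 ^ I.n)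

/-- The length `|I| = 2^{-n}` of a dyadic interval. -/
noncomputable def len (I : DI) : ENNReal := ENNReal.ofReal ((2 : ℝ)⁻¹ ^ I.n)

end DI

/-- The Carleson sum `∑_{I ∈ L, I ⊆ J} |I|`. -/
noncomputable def carlesonSum (L : Set DI) (J : DI) : ENNReal :=
  ∑' I : {I : DI // I ∈ L ∧ I.carrier ⊆ J.carrier}, I.1.len

/-- `L` satisfies the `M`-Carleson condition. -/
def CarlesonLE (L : Set DI) (M : ENNReal) : Prop :=
  ∀ J : DI, carlesonSum L J ≤ M * J.len

/-- The Carleson constant `⟦L⟧ = sup_J (1/|J|) ∑_{I ∈ L, I ⊆ J} |I|`. -/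
noncomputable def carlesonConst (L : Set DI) : ENNReal :=
  ⨆ J : DI, carlesonSum L J / J.len

/-- The square of the dyadic BMO norm of `x = ∑ x_I h_I`,
`‖x‖² = sup_J (1/|J|) ∑_{I ⊆ J} x_I² |I|`, in terms of the Haar coefficients. -/
noncomputable def bmoSq (x : DI → ℝ) : ENNReal :=
  ⨆ J : DI, (∑' I : {I : DI // I.carrier ⊆ J.carrier},
      ENNReal.ofReal ((x I.1) ^ 2) * I.1.len) / J.len

/-- `|L*|`: the Lebesgue measure of the set covered by the collection `L`. -/
noncomputable def covMeas (L : Set DI) : ENNReal := volume (⋃ I ∈ L, I.carrier)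

/-- `y` is the coefficient function of `Tx` where `T h_I = h_{τ(I)}` and `x` has
coefficients `x_I`. -/
def HaarCompat (τ : DI → DI) (x y : DI → ℝ) : Prop :=
  (∀ I, y (τ I) = x I) ∧ ∀ J, J ∉ Set.range τ → y J = 0

/-- The maximal elements of a collection of dyadic intervals, under inclusion. -/
def maxSet (S : Set DI) : Set DI :=
  {I | I ∈ S ∧ ∀ K ∈ S, I.carrier ⊆ K.carrier → I = K}

/-!
Let `m = ⌈⟦B⟧⌉` and sort the members of `B` by their depth in `B` (the number of strictly larger
members) modulo `m`. Inside a fixed `K ∈ B` the members of a given depth are disjoint and each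
lies in one of depth one less, so the mass of the depth levels decreases; as a class meets only
every `m`-th level, its Carleson constant is at most `2`. The hypothesis then gives
`⟦τ(class)⟧ ≤ 4C`, and subadditivity over the `m ≤ 2⟦B⟧` classes gives `⟦τ(B)⟧ ≤ 8C⟦B⟧`.
-/

open scoped ENNReal NNReal

namespace DI

lemma ext {I K : DI} (hn : I.n = K.n) (hk : I.k = K.k) : I = K := by
  cases I; cases K; simp_all

lemma mem_carrier_iff {I : DI} {x : ℝ} : x ∈ I.carrier ↔ ⌊x * 2 ^ I.n⌋ = I.k := by
  have h2 : (0 : ℝ) < 2 ^ I.n := by positivity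
  rw [carrier, Set.mem_Ico, Int.floor_eq_iff, div_le_iff₀ h2, lt_div_iff₀ h2]
  push_cast
  rfl

lemma floor_mul_two_pow_of_le {m n : ℕ} (h : m ≤ n) (x : ℝ) :
    ⌊x * 2 ^ m⌋ = ⌊x * 2 ^ n⌋ / ((2 ^ (n - m) : ℕ) : ℤ) := by
  rw [← Int.floor_div_natCast]
  congr 1
  rw [← Nat.add_sub_of_le h, pow_add]
  push_cast
  rw [Nat.add_sub_cancel_left]
  field_simp

lemma carrier_subset_of_mem {I K : DI} (hn : K.n ≤ I.n) {x : ℝ} (hI : x ∈ I.carrier)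
    (hK : x ∈ K.carrier) : I.carrier ⊆ K.carrier := by
  intro y hy
  rw [mem_carrier_iff] at hI hK hy ⊢
  rw [floor_mul_two_pow_of_le hn, hy, ← hI, ← floor_mul_two_pow_of_le hn, hK]

lemma carrier_subset_or_subset_of_mem {I K : DI} {x : ℝ} (hI : x ∈ I.carrier)
    (hK : x ∈ K.carrier) : I.carrier ⊆ K.carrier ∨ K.carrier ⊆ I.carrier :=
  (le_total K.n I.n).imp (carrier_subset_of_mem · hI hK) (carrier_subset_of_mem · hK hI)

lemma carrier_nonempty (I : DI) : I.carrier.Nonempty :=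
  Set.nonempty_Ico.2 (by gcongr; linarith)

lemma carrier_injective : Function.Injective DI.carrier := by
  intro I K h
  have h2I : (0 : ℝ) < 2 ^ I.n := by positivity
  have h2K : (0 : ℝ) < 2 ^ K.n := by positivity
  obtain ⟨hl, hr⟩ := (Set.Ico_eq_Ico_iff (Or.inl (by gcongr; linarith))).1 h
  have hpow : (2 : ℝ) ^ I.n = 2 ^ K.n := by
    rw [add_div, add_div, hl, add_right_inj, one_div, one_div, inv_inj] at hr
    exact hr
  have hn : I.n = K.n := pow_right_injective₀ two_pos (by norm_num) hpow
  refine ext hn ?_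
  rw [hpow, div_left_inj' h2K.ne'] at hl
  exact_mod_cast hl

lemma n_le_of_carrier_subset {I K : DI} (h : I.carrier ⊆ K.carrier) : K.n ≤ I.n := by
  by_contra! hlt
  obtain ⟨x, hx⟩ := I.carrier_nonempty
  have hKI := carrier_subset_of_mem hlt.le (h hx) hx
  exact hlt.ne (congrArg DI.n (carrier_injective (h.antisymm hKI)))

lemma eq_of_n_eq_of_mem {I K : DI} (hn : I.n = K.n) {x : ℝ} (hI : x ∈ I.carrier)
    (hK : x ∈ K.carrier) : I = K :=
  carrier_injective <|
    (carrier_subset_of_mem hn.ge hI hK).antisymm (carrier_subset_of_mem hn.le hK hI)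

lemma finite_setOf_carrier_subset (I : DI) : {K : DI | I.carrier ⊆ K.carrier}.Finite := by
  obtain ⟨x, hx⟩ := I.carrier_nonempty
  refine Set.Finite.of_finite_image (f := DI.n) ((Set.finite_Iic I.n).subset ?_) ?_
  · rintro _ ⟨K, hK, rfl⟩
    exact n_le_of_carrier_subset hK
  · exact fun K₁ h₁ K₂ h₂ hn => eq_of_n_eq_of_mem hn (h₁ hx) (h₂ hx)

instance : Countable DI :=
  Function.Injective.countable (f := fun I : DI => (I.n, I.k)) fun _ _ h =>
    ext (Prod.ext_iff.1 h).1 (Prod.ext_iff.1 h).2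

lemma volume_carrier (I : DI) : volume I.carrier = I.len := by
  rw [carrier, Real.volume_Ico, len, inv_pow]
  congr 1
  field_simp
  ring

lemma len_ne_zero (I : DI) : I.len ≠ 0 := by
  simp only [len, ne_eq, ENNReal.ofReal_eq_zero, not_le]
  positivity

lemma len_ne_top (I : DI) : I.len ≠ ∞ := ENNReal.ofReal_ne_top

lemma pairwiseDisjoint_carrier_of_isAntichain {S : Set DI}
    (hS : IsAntichain (fun I K : DI => I.carrier ⊆ K.carrier) S) :
    S.PairwiseDisjoint DI.carrier := by
  intro I hI K hK hne
  refine Set.disjoint_left.2 fun x hxI hxK => ?_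
  rcases carrier_subset_or_subset_of_mem hxI hxK with h | h
  exacts [hS hI hK hne h, hS hK hI hne.symm h]

lemma exists_mem_maxSet_carrier_subset {S : Set DI} {I : DI} (hI : I ∈ S) :
    ∃ T ∈ maxSet S, I.carrier ⊆ T.carrier := by
  obtain ⟨T, ⟨hTS, hIT⟩, hmin⟩ := Set.exists_min_image {K | K ∈ S ∧ I.carrier ⊆ K.carrier} DI.n
    ((finite_setOf_carrier_subset I).subset fun K hK => hK.2) ⟨I, hI, subset_rfl⟩
  obtain ⟨x, hx⟩ := T.carrier_nonempty
  refine ⟨T, ⟨hTS, fun K hK hTK => ?_⟩, hIT⟩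
  exact eq_of_n_eq_of_mem ((hmin K ⟨hK, hIT.trans hTK⟩).antisymm (n_le_of_carrier_subset hTK))
    hx (hTK hx)

lemma isAntichain_maxSet (S : Set DI) :
    IsAntichain (fun I K : DI => I.carrier ⊆ K.carrier) (maxSet S) :=
  fun _ hI _ hK hne h => hne (hI.2 _ hK.1 h)

end DI

instance : MeasurableSpace DI := ⊤

instance : DiscreteMeasurableSpace DI := ⟨fun _ => trivial⟩

-- Carleson sums become masses of sets of intervals, so they inherit monotonicity and countable
-- subadditivity from measure theory.
noncomputable def lenMeasure : Measure DI := Measure.sum fun I : DI => I.len • Measure.dirac I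

lemma lenMeasure_apply (S : Set DI) : lenMeasure S = ∑' I : S, I.1.len := by
  rw [lenMeasure, Measure.sum_apply _ (.of_discrete), tsum_subtype]
  congr with I
  by_cases hI : I ∈ S <;> simp [Measure.dirac_apply', hI]

lemma lenMeasure_singleton (I : DI) : lenMeasure {I} = I.len := by
  rw [lenMeasure_apply, tsum_singleton I DI.len]

lemma lenMeasure_eq_volume_biUnion {S : Set DI} (hS : S.PairwiseDisjoint DI.carrier) :
    lenMeasure S = volume (⋃ I ∈ S, I.carrier) := by
  rw [measure_biUnion S.to_countable hS fun I _ => measurableSet_Ico, lenMeasure_apply]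
  simp_rw [DI.volume_carrier]

lemma carlesonSum_eq_lenMeasure (L : Set DI) (J : DI) :
    carlesonSum L J = lenMeasure {I | I ∈ L ∧ I.carrier ⊆ J.carrier} :=
  (lenMeasure_apply _).symm

section Carleson

variable {L : Set DI} {M : ℝ≥0∞}

lemma carlesonLE_carlesonConst (L : Set DI) : CarlesonLE L (carlesonConst L) := fun J =>
  calc carlesonSum L J = carlesonSum L J / J.len * J.len :=
        (ENNReal.div_mul_cancel J.len_ne_zero J.len_ne_top).symm
    _ ≤ carlesonConst L * J.len := by gcongr; exact le_iSup (fun J => carlesonSum L J / J.len) J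

lemma CarlesonLE.carlesonConst_le (h : CarlesonLE L M) : carlesonConst L ≤ M :=
  iSup_le fun J => ENNReal.div_le_of_le_mul (h J)

lemma CarlesonLE.mono {N : ℝ≥0∞} (h : CarlesonLE L M) (hMN : M ≤ N) : CarlesonLE L N :=
  fun J => (h J).trans (by gcongr)

lemma carlesonConst_empty : carlesonConst ∅ = 0 :=
  le_zero_iff.1 (CarlesonLE.carlesonConst_le fun J => by simp [carlesonSum_eq_lenMeasure])

lemma one_le_carlesonConst (hL : L.Nonempty) : 1 ≤ carlesonConst L := by
  obtain ⟨I, hI⟩ := hL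
  have hlen : I.len ≤ carlesonConst L * I.len :=
    calc I.len = lenMeasure {I} := (lenMeasure_singleton I).symm
      _ ≤ carlesonSum L I := by
        rw [carlesonSum_eq_lenMeasure]
        exact measure_mono (Set.singleton_subset_iff.2 ⟨hI, subset_rfl⟩)
      _ ≤ carlesonConst L * I.len := carlesonLE_carlesonConst L I
  rwa [← ENNReal.mul_le_mul_iff_left I.len_ne_zero I.len_ne_top, one_mul]

lemma carlesonLE_of_forall_mem (h : ∀ K ∈ L, carlesonSum L K ≤ M * K.len) :
    CarlesonLE L M := by
  intro J
  set U := {I | I ∈ L ∧ I.carrier ⊆ J.carrier}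
  have hcover : U ⊆ ⋃ T ∈ maxSet U, {I | I ∈ L ∧ I.carrier ⊆ T.carrier} := fun I hI => by
    obtain ⟨T, hT, hIT⟩ := DI.exists_mem_maxSet_carrier_subset hI
    exact Set.mem_biUnion hT ⟨hI.1, hIT⟩
  calc carlesonSum L J = lenMeasure U := carlesonSum_eq_lenMeasure L J
    _ ≤ ∑' T : maxSet U, carlesonSum L T := by
        simp_rw [carlesonSum_eq_lenMeasure]
        exact (measure_mono hcover).trans (measure_biUnion_le _ (Set.to_countable _) _)
    _ ≤ ∑' T : maxSet U, M * T.1.len := ENNReal.tsum_le_tsum fun T => h T T.2.1.1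
    _ = M * volume (⋃ T ∈ maxSet U, T.carrier) := by
        rw [ENNReal.tsum_mul_left, ← lenMeasure_apply, lenMeasure_eq_volume_biUnion
          (DI.pairwiseDisjoint_carrier_of_isAntichain (DI.isAntichain_maxSet U))]
    _ ≤ M * J.len := by
        rw [← DI.volume_carrier]
        gcongr
        exact Set.iUnion₂_subset fun T hT => hT.1.2

lemma carlesonConst_biUnion_le {ι : Type*} (s : Finset ι) (S : ι → Set DI) :
    carlesonConst (⋃ j ∈ s, S j) ≤ ∑ j ∈ s, carlesonConst (S j) := by
  refine CarlesonLE.carlesonConst_le fun J => ?_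
  have hunion : {I | I ∈ ⋃ j ∈ s, S j ∧ I.carrier ⊆ J.carrier}
      = ⋃ j ∈ s, {I | I ∈ S j ∧ I.carrier ⊆ J.carrier} := by
    ext I
    simp only [Set.mem_iUnion, exists_prop, Set.mem_ofPred]
    tauto
  calc carlesonSum (⋃ j ∈ s, S j) J ≤ ∑ j ∈ s, carlesonSum (S j) J := by
        simp_rw [carlesonSum_eq_lenMeasure, hunion]
        exact measure_biUnion_finset_le s _
    _ ≤ ∑ j ∈ s, carlesonConst (S j) * J.len :=
        Finset.sum_le_sum fun j _ => carlesonLE_carlesonConst (S j) J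
    _ = (∑ j ∈ s, carlesonConst (S j)) * J.len := (Finset.sum_mul ..).symm

end Carleson

lemma natCast_mul_tsum_le_tsum_of_antitone {a : ℕ → ℝ≥0∞} (ha : Antitone a) (m : ℕ) :
    m * ∑' k, a ((k + 1) * m) ≤ ∑' t, a (t + 1) := by
  rcases Nat.eq_zero_or_pos m with rfl | hm
  · simp
  have : NeZero m := ⟨hm.ne'⟩
  calc m * ∑' k, a ((k + 1) * m) = ∑' p : ℕ × Fin m, a ((p.1 + 1) * m) := by
        simp [ENNReal.tsum_prod', ← ENNReal.tsum_mul_left]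
    _ ≤ ∑' p : ℕ × Fin m, a (p.1 * m + p.2 + 1) :=
        ENNReal.tsum_le_tsum fun p => ha (by have := p.2.2; rw [add_mul]; omega)
    _ = ∑' t, a (t + 1) := (Nat.divModEquiv m).symm.tsum_eq fun t => a (t + 1)

namespace DI

variable {B : Set DI} {I K : DI}

def strictAnc (B : Set DI) (I : DI) : Set DI := {K | K ∈ B ∧ I.carrier ⊆ K.carrier ∧ K ≠ I}

lemma finite_strictAnc (B : Set DI) (I : DI) : (strictAnc B I).Finite :=
  (finite_setOf_carrier_subset I).subset fun _ hK => hK.2.1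

noncomputable def depth (B : Set DI) (I : DI) : ℕ := (strictAnc B I).ncard

lemma depth_lt_depth (hK : K ∈ B) (hIK : I.carrier ⊆ K.carrier) (hne : I ≠ K) :
    depth B K < depth B I := by
  have hsub : insert K (strictAnc B K) ⊆ strictAnc B I := by
    rintro L (rfl | ⟨hL, hKL, hLK⟩)
    · exact ⟨hK, hIK, hne.symm⟩
    · exact ⟨hL, hIK.trans hKL, fun hLI => hLK (carrier_injective ((hLI ▸ hIK).antisymm hKL))⟩
  have := Set.ncard_le_ncard hsub (finite_strictAnc B I)
  rwa [Set.ncard_insert_of_notMem (fun h => h.2.2 rfl) (finite_strictAnc B K)] at this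

lemma depth_le_depth (hK : K ∈ B) (hIK : I.carrier ⊆ K.carrier) : depth B K ≤ depth B I := by
  rcases eq_or_ne I K with rfl | hne
  exacts [le_rfl, (depth_lt_depth hK hIK hne).le]

lemma exists_parent (hI : depth B I ≠ 0) :
    ∃ P ∈ strictAnc B I, (∀ L ∈ strictAnc B I, P.carrier ⊆ L.carrier) ∧
      depth B I = depth B P + 1 := by
  obtain ⟨P, hP, hmax⟩ := Set.exists_max_image _ DI.n (finite_strictAnc B I)
    (Set.nonempty_of_ncard_ne_zero hI)
  obtain ⟨x, hx⟩ := I.carrier_nonempty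
  have hPmin : ∀ L ∈ strictAnc B I, P.carrier ⊆ L.carrier := fun L hL =>
    (carrier_subset_or_subset_of_mem (hP.2.1 hx) (hL.2.1 hx)).elim id fun hLP =>
      (eq_of_n_eq_of_mem ((hmax L hL).antisymm (n_le_of_carrier_subset hLP)) (hL.2.1 hx)
        (hP.2.1 hx)).symm ▸ subset_rfl
  have hanc : strictAnc B I = insert P (strictAnc B P) := by
    ext L
    refine ⟨fun hL => ?_, ?_⟩
    · rcases eq_or_ne L P with rfl | hLP
      exacts [Set.mem_insert _ _, Set.mem_insert_of_mem _ ⟨hL.1, hPmin L hL, hLP⟩]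
    · rintro (rfl | ⟨hL, hPL, hLP⟩)
      · exact hP
      · exact ⟨hL, hP.2.1.trans hPL,
          fun hLI => hLP (carrier_injective ((hLI ▸ hP.2.1).antisymm hPL))⟩
  refine ⟨P, hP, hPmin, ?_⟩
  rw [depth, hanc, Set.ncard_insert_of_notMem (fun h => h.2.2 rfl) (finite_strictAnc B P), depth]

def level (B : Set DI) (K : DI) (t : ℕ) : Set DI :=
  {I | I ∈ B ∧ I.carrier ⊆ K.carrier ∧ depth B I = t}

lemma isAntichain_level (B : Set DI) (K : DI) (t : ℕ) :
    IsAntichain (fun I K : DI => I.carrier ⊆ K.carrier) (level B K t) :=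
  fun _ hI _ hL hne h => (depth_lt_depth hL.1 h hne).ne (hL.2.2.trans hI.2.2.symm)

lemma biUnion_level_succ_subset (hK : K ∈ B) {t : ℕ} (ht : depth B K ≤ t) :
    ⋃ I ∈ level B K (t + 1), I.carrier ⊆ ⋃ I ∈ level B K t, I.carrier := by
  refine Set.iUnion₂_subset fun I ⟨hIB, hIK, hIt⟩ => ?_
  have hne : I ≠ K := by rintro rfl; omega
  obtain ⟨P, hP, hPmin, hIP⟩ := exists_parent (B := B) (by omega : depth B I ≠ 0)
  exact hP.2.1.trans (Set.subset_biUnion_of_mem (u := DI.carrier)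
    ⟨hP.1, hPmin K ⟨hK, hIK, hne.symm⟩, by omega⟩)

lemma antitone_lenMeasure_level (hK : K ∈ B) :
    Antitone fun t => lenMeasure (level B K (depth B K + t)) := by
  refine antitone_nat_of_succ_le fun t => ?_
  simp only [lenMeasure_eq_volume_biUnion
    (pairwiseDisjoint_carrier_of_isAntichain (isAntichain_level B K _))]
  exact measure_mono (biUnion_level_succ_subset hK (Nat.le_add_right _ t))

lemma level_depth_subset (hK : K ∈ B) : level B K (depth B K) ⊆ {K} := fun _ hI =>
  by_contra fun hne => (depth_lt_depth hK hI.2.1 hne).ne' hI.2.2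

lemma tsum_lenMeasure_level (B : Set DI) (K : DI) :
    ∑' t, lenMeasure (level B K t) = carlesonSum B K := by
  have hdisj : Pairwise (Function.onFun Disjoint (level B K)) := fun s t hst =>
    Set.disjoint_left.2 fun _ hs ht => hst (hs.2.2.symm.trans ht.2.2)
  rw [← measure_iUnion hdisj fun _ => .of_discrete, carlesonSum_eq_lenMeasure]
  exact congrArg lenMeasure <| by
    ext I
    simp only [level, Set.mem_iUnion, Set.mem_ofPred, exists_and_left, exists_eq', and_true]

end DI

section DepthClass

open DI

def depthClass (B : Set DI) (m j : ℕ) : Set DI := {I | I ∈ B ∧ depth B I % m = j}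

variable {B : Set DI} {m j : ℕ} {K : DI}

lemma biUnion_depthClass (hm : 0 < m) : ⋃ j ∈ Finset.range m, depthClass B m j = B := by
  ext I
  simp only [depthClass, Set.mem_iUnion, Finset.mem_range, Set.mem_ofPred, exists_prop]
  exact ⟨fun ⟨_, _, hI, _⟩ => hI, fun hI => ⟨_, Nat.mod_lt _ hm, hI, rfl⟩⟩

lemma subset_iUnion_level_of_depthClass (hK : K ∈ depthClass B m j) :
    {I | I ∈ depthClass B m j ∧ I.carrier ⊆ K.carrier} ⊆
      ⋃ k : ℕ, level B K (depth B K + k * m) := by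
  rintro I ⟨⟨hIB, hIj⟩, hIK⟩
  have hle := depth_le_depth hK.1 hIK
  have hdvd : m ∣ depth B I - depth B K :=
    Nat.dvd_of_mod_eq_zero (Nat.sub_mod_eq_zero_of_mod_eq (hIj.trans hK.2.symm))
  refine Set.mem_iUnion.2 ⟨(depth B I - depth B K) / m, hIB, hIK, ?_⟩
  rw [Nat.div_mul_cancel hdvd]
  omega

/-- Below `K` the mass of the depth levels decreases, and the class meets only every `m`-th
level, so it collects at most `|K|` plus a `1/m` share of `carlesonSum B K ≤ m |K|`. -/
lemma carlesonSum_depthClass_le (hm : 0 < m) (hB : CarlesonLE B m) (hK : K ∈ depthClass B m j) :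
    carlesonSum (depthClass B m j) K ≤ 2 * K.len := by
  set a := fun t => lenMeasure (level B K (depth B K + t))
  have ha : Antitone a := antitone_lenMeasure_level hK.1
  have hclass : carlesonSum (depthClass B m j) K ≤ a 0 + ∑' k, a ((k + 1) * m) := by
    rw [← zero_mul m, ← tsum_eq_zero_add' (f := fun k => a (k * m)) ENNReal.summable,
      carlesonSum_eq_lenMeasure]
    exact (measure_mono (subset_iUnion_level_of_depthClass hK)).trans (measure_iUnion_le _)
  have htop : a 0 ≤ K.len :=
    (measure_mono (level_depth_subset hK.1)).trans (lenMeasure_singleton K).le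
  have htail : ∑' t, a (t + 1) ≤ m * K.len :=
    calc ∑' t, a (t + 1) ≤ ∑' t, lenMeasure (level B K t) :=
          ENNReal.tsum_comp_le_tsum_of_injective (fun s t h => by omega) _
      _ = carlesonSum B K := tsum_lenMeasure_level B K
      _ ≤ m * K.len := hB K
  rw [← ENNReal.mul_le_mul_iff_right (Nat.cast_ne_zero.2 hm.ne') (ENNReal.natCast_ne_top m)]
  calc (m : ℝ≥0∞) * carlesonSum (depthClass B m j) K
      ≤ m * a 0 + m * ∑' k, a ((k + 1) * m) := by rw [← mul_add]; gcongr
    _ ≤ m * K.len + m * K.len :=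
        add_le_add (by gcongr) ((natCast_mul_tsum_le_tsum_of_antitone ha m).trans htail)
    _ = m * (2 * K.len) := by ring

lemma carlesonConst_depthClass_le (hm : 0 < m) (hB : CarlesonLE B m) :
    carlesonConst (depthClass B m j) ≤ 2 :=
  (carlesonLE_of_forall_mem fun _ hK => carlesonSum_depthClass_le hm hB hK).carlesonConst_le

end DepthClass

lemma exists_nat_ge_le_two_mul {M : ℝ≥0∞} (h1 : 1 ≤ M) (htop : M ≠ ∞) :
    ∃ m : ℕ, 0 < m ∧ M ≤ m ∧ (m : ℝ≥0∞) ≤ 2 * M := by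
  lift M to ℝ≥0 using htop
  have h1 : (1 : ℝ≥0) ≤ M := by exact_mod_cast h1
  refine ⟨⌈M⌉₊, Nat.ceil_pos.2 (one_pos.trans_le h1), mod_cast Nat.le_ceil M, ?_⟩
  have hceil : (⌈M⌉₊ : ℝ≥0) ≤ 2 * M :=
    calc (⌈M⌉₊ : ℝ≥0) ≤ M + 1 := (Nat.ceil_lt_add_one zero_le).le
      _ ≤ 2 * M := by rw [two_mul]; gcongr
  exact_mod_cast hceil

theorem stmt15_general (τ : DI → DI) (C : ENNReal)
    (h : ∀ B : Set DI, carlesonConst (τ '' B) ≤ C * carlesonConst B ^ 2)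
    (B : Set DI) :
    carlesonConst (τ '' B) ≤ 16 * C * carlesonConst B := by
  obtain rfl | hB := B.eq_empty_or_nonempty
  · simp [carlesonConst_empty]
  obtain htop | htop := eq_or_ne (carlesonConst B) ∞
  · rcases eq_or_ne C 0 with rfl | hC
    · simpa using h B
    · simp [htop, hC, ENNReal.mul_top]
  obtain ⟨m, hm, hBm, hmB⟩ := exists_nat_ge_le_two_mul (one_le_carlesonConst hB) htop
  calc carlesonConst (τ '' B) = carlesonConst (⋃ j ∈ Finset.range m, τ '' depthClass B m j) := by
        rw [← Set.image_iUnion₂, biUnion_depthClass hm]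
    _ ≤ ∑ j ∈ Finset.range m, carlesonConst (τ '' depthClass B m j) :=
        carlesonConst_biUnion_le _ _
    _ ≤ ∑ j ∈ Finset.range m, C * 2 ^ 2 := by
        refine Finset.sum_le_sum fun j _ => (h _).trans ?_
        gcongr
        exact carlesonConst_depthClass_le hm ((carlesonLE_carlesonConst B).mono hBm)
    _ = m * (C * 4) := by rw [Finset.sum_const, Finset.card_range, nsmul_eq_mul]; norm_num
    _ ≤ 2 * carlesonConst B * (C * 4) := by gcongr
    _ ≤ 16 * C * carlesonConst B := by ring_nf; gcongr; norm_num

/-- Upgrading a quadratic Carleson bound to a linear one: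
if `⟦τ(B)⟧ ≤ C ⟦B⟧²` for all `B`, then `⟦τ(B)⟧ ≤ 16C ⟦B⟧` for all `B`. -/
theorem stmt15 (τ : DI → DI) (hτ : Function.Injective τ) (C : ENNReal) (hC : 1 ≤ C)
    (h : ∀ B : Set DI, carlesonConst (τ '' B) ≤ C * carlesonConst B ^ 2)
    (B : Set DI) :
    carlesonConst (τ '' B) ≤ 16 * C * carlesonConst B :=
  stmt15_general τ C h B
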